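/- Let α ∈ (1,2) and suppose there exist constants C₀' > 0 and M > 0 such that for j ∈ {1,2} and all η ≥ M, |E_{α,j}(-η) - 1/(Γ(j-α)·η)| ≤ C₀'/η². Let (λ_n)_{n≥1} be a sequence with λ_n ≥ λ₁ > 0 and let (a_n^{(j)})_{j=0,1} be square-summable sequences. Define, for t > 0, u(t) = Σ_{j=0}^{1} t^j Σ_{n=1}^∞ E_{α,j+1}(-λ_n t^α) a_n^{(j)} e_n in a Hilbert space with orthonormal basis (e_n). Then for t with λ₁ t^α ≥ M, ‖u(t) - Σ_{j=0}^{1} (t^{j-α}/Γ(j+1-α)) Σ_n (a_n^{(j)}/λ_n) e_n‖² ≤ 2 (C₀')² Σ_{j=0}^{1} t^{2(j-2α)} Σ_n |a_n^{(j)}/λ_n²|². -/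
import Mathlib


open scoped BigOperators

private lemma aux_orthonormal_tsum {H : Type*} [NormedAddCommGroup H] [InnerProductSpace ℝ H]
    [CompleteSpace H] {e : ℕ → H} (he : Orthonormal ℝ e) {f : ℕ → ℝ}
    (hf : Summable fun n => f n ^ 2) :
    Summable (fun n => f n • e n) ∧ ‖∑' n, f n • e n‖ ^ 2 = ∑' n, f n ^ 2 := by
  have hV := he.orthogonalFamily
  have hsum : Summable (fun n => f n • e n) := by
    have := (hV.summable_iff_norm_sq_summable f).2 (by
      simpa [Real.norm_eq_abs, sq_abs] using hf)
    simpa [LinearIsometry.toSpanSingleton_apply] using this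
  refine ⟨hsum, ?_⟩
  have h1 : Filter.Tendsto (fun s : Finset ℕ => ‖∑ n ∈ s, f n • e n‖ ^ 2) Filter.atTop
      (nhds (‖∑' n, f n • e n‖ ^ 2)) :=
    ((continuous_norm.pow 2).tendsto _).comp hsum.hasSum
  have h2 : Filter.Tendsto (fun s : Finset ℕ => ‖∑ n ∈ s, f n • e n‖ ^ 2) Filter.atTop
      (nhds (∑' n, f n ^ 2)) := by
    refine hf.hasSum.congr fun s => ?_
    have := hV.norm_sum f s
    simpa [LinearIsometry.toSpanSingleton_apply, Real.norm_eq_abs, sq_abs] using this.symm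
  exact tendsto_nhds_unique h1 h2

private lemma aux_sq_add (x y : ℝ) : (x + y) ^ 2 ≤ 2 * (x ^ 2 + y ^ 2) := by
  nlinarith [sq_nonneg (x - y)]

private lemma aux_sq_sum (g : Fin 2 → ℝ) : (∑ j, g j) ^ 2 ≤ 2 * ∑ j, g j ^ 2 := by
  rw [Fin.sum_univ_two, Fin.sum_univ_two]
  nlinarith [sq_nonneg (g 0 - g 1)]

/-- Abstract Hilbert-space long-time asymptotic estimate (Theorem 1, case β = 0). -/
theorem longtime_asymptotic_estimate (α C₀' M : ℝ) (hα₁ : 1 < α) (hα₂ : α < 2)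
    (hC : 0 < C₀') (hM : 0 < M)
    {H : Type*} [NormedAddCommGroup H] [InnerProductSpace ℝ H] [CompleteSpace H]
    (e : ℕ → H) (he : Orthonormal ℝ e)
    (lam : ℕ → ℝ) (lam₁ : ℝ) (hlam₁ : 0 < lam₁) (hlam : ∀ n, lam₁ ≤ lam n)
    (a : Fin 2 → ℕ → ℝ) (ha : ∀ j, Summable fun n => (a j n) ^ 2)
    (hE : ∀ j : Fin 2, ∀ η : ℝ, M ≤ η →
      |(∑' k : ℕ, (-η) ^ k / Real.Gamma (α * k + ((j:ℕ):ℝ) + 1)) -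
          1 / (Real.Gamma (((j:ℕ):ℝ) + 1 - α) * η)| ≤ C₀' / η ^ 2)
    (t : ℝ) (ht : 0 < t) (htM : M ≤ lam₁ * t ^ α) :
    ‖(∑' n : ℕ, (∑ j : Fin 2, t ^ (j:ℕ) *
          (∑' k : ℕ, (-(lam n * t ^ α)) ^ k / Real.Gamma (α * k + ((j:ℕ):ℝ) + 1)) *
          a j n) • e n) -
        ∑' n : ℕ, (∑ j : Fin 2,
          t ^ (((j:ℕ):ℝ) - α) / Real.Gamma (((j:ℕ):ℝ) + 1 - α) * (a j n / lam n)) • e n‖ ^ 2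
      ≤ 2 * C₀' ^ 2 * ∑ j : Fin 2,
          t ^ (2 * (((j:ℕ):ℝ) - 2 * α)) * ∑' n : ℕ, (a j n / (lam n) ^ 2) ^ 2 := by
  have htα : (0:ℝ) < t ^ α := Real.rpow_pos_of_pos ht α
  have hlampos : ∀ n, 0 < lam n := fun n => lt_of_lt_of_le hlam₁ (hlam n)
  have hηM : ∀ n, M ≤ lam n * t ^ α := fun n =>
    le_trans htM (mul_le_mul_of_nonneg_right (hlam n) htα.le)
  -- helper: (t^x)^2 = t^(2x)
  have hsq : ∀ x : ℝ, (t ^ x) ^ 2 = t ^ (2 * x) := by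
    intro x
    rw [mul_comm, Real.rpow_mul ht.le, Real.rpow_two]
  -- the coefficient sequences
  set c : ℕ → ℝ := fun n => ∑ j : Fin 2, t ^ (j:ℕ) *
      (∑' k : ℕ, (-(lam n * t ^ α)) ^ k / Real.Gamma (α * k + ((j:ℕ):ℝ) + 1)) * a j n with hc
  set d : ℕ → ℝ := fun n => ∑ j : Fin 2,
      t ^ (((j:ℕ):ℝ) - α) / Real.Gamma (((j:ℕ):ℝ) + 1 - α) * (a j n / lam n) with hd
  set b : Fin 2 → ℕ → ℝ := fun j n =>
      t ^ (2 * (((j:ℕ):ℝ) - 2 * α)) * (a j n / (lam n) ^ 2) ^ 2 with hb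
  -- per-term bound
  have hterm : ∀ (j : Fin 2) (n : ℕ),
      |t ^ (j:ℕ) * (∑' k : ℕ, (-(lam n * t ^ α)) ^ k / Real.Gamma (α * k + ((j:ℕ):ℝ) + 1)) *
          a j n - t ^ (((j:ℕ):ℝ) - α) / Real.Gamma (((j:ℕ):ℝ) + 1 - α) * (a j n / lam n)|
        ≤ C₀' * (t ^ (((j:ℕ):ℝ) - 2 * α) * (|a j n| / (lam n) ^ 2)) := by
    intro j n
    set G : ℝ := ∑' k : ℕ, (-(lam n * t ^ α)) ^ k / Real.Gamma (α * k + ((j:ℕ):ℝ) + 1) with hG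
    have hrw : t ^ (((j:ℕ):ℝ) - α) = t ^ (j:ℕ) / t ^ α := by
      rw [Real.rpow_sub ht, Real.rpow_natCast]
    have hid : t ^ (j:ℕ) * G * a j n
        - t ^ (((j:ℕ):ℝ) - α) / Real.Gamma (((j:ℕ):ℝ) + 1 - α) * (a j n / lam n)
        = t ^ (j:ℕ) * a j n *
          (G - 1 / (Real.Gamma (((j:ℕ):ℝ) + 1 - α) * (lam n * t ^ α))) := by
      rw [hrw]
      simp only [div_eq_mul_inv, mul_inv]
      ring
    rw [hid, abs_mul, abs_mul, abs_of_nonneg (pow_nonneg ht.le _)]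
    have hEb := hE j (lam n * t ^ α) (hηM n)
    calc t ^ (j:ℕ) * |a j n| *
          |G - 1 / (Real.Gamma (((j:ℕ):ℝ) + 1 - α) * (lam n * t ^ α))|
        ≤ t ^ (j:ℕ) * |a j n| * (C₀' / (lam n * t ^ α) ^ 2) := by
          gcongr
      _ = C₀' * (t ^ (((j:ℕ):ℝ) - 2 * α) * (|a j n| / (lam n) ^ 2)) := by
          have h2 : t ^ (((j:ℕ):ℝ) - 2 * α) = t ^ (j:ℕ) / (t ^ α) ^ 2 := by
            rw [Real.rpow_sub ht, Real.rpow_natCast, hsq]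
          rw [h2, mul_pow]
          simp only [div_eq_mul_inv, mul_inv]
          ring
  -- the pointwise squared bound
  have hrsq : ∀ n, (c n - d n) ^ 2 ≤ 2 * C₀' ^ 2 * ∑ j : Fin 2, b j n := by
    intro n
    have h1 : |c n - d n| ≤ C₀' * ∑ j : Fin 2, t ^ (((j:ℕ):ℝ) - 2 * α) * (|a j n| / (lam n) ^ 2) := by
      rw [hc, hd]
      calc |(∑ j : Fin 2, t ^ (j:ℕ) *
              (∑' k : ℕ, (-(lam n * t ^ α)) ^ k / Real.Gamma (α * k + ((j:ℕ):ℝ) + 1)) * a j n)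
            - ∑ j : Fin 2, t ^ (((j:ℕ):ℝ) - α) / Real.Gamma (((j:ℕ):ℝ) + 1 - α) * (a j n / lam n)|
          = |∑ j : Fin 2, (t ^ (j:ℕ) *
              (∑' k : ℕ, (-(lam n * t ^ α)) ^ k / Real.Gamma (α * k + ((j:ℕ):ℝ) + 1)) * a j n
            - t ^ (((j:ℕ):ℝ) - α) / Real.Gamma (((j:ℕ):ℝ) + 1 - α) * (a j n / lam n))| := by
            rw [Finset.sum_sub_distrib]
        _ ≤ ∑ j : Fin 2, |t ^ (j:ℕ) *
              (∑' k : ℕ, (-(lam n * t ^ α)) ^ k / Real.Gamma (α * k + ((j:ℕ):ℝ) + 1)) * a j n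
            - t ^ (((j:ℕ):ℝ) - α) / Real.Gamma (((j:ℕ):ℝ) + 1 - α) * (a j n / lam n)| :=
            Finset.abs_sum_le_sum_abs _ _
        _ ≤ ∑ j : Fin 2, C₀' * (t ^ (((j:ℕ):ℝ) - 2 * α) * (|a j n| / (lam n) ^ 2)) :=
            Finset.sum_le_sum fun j _ => hterm j n
        _ = C₀' * ∑ j : Fin 2, t ^ (((j:ℕ):ℝ) - 2 * α) * (|a j n| / (lam n) ^ 2) := by
            rw [Finset.mul_sum]
    have h2 : (c n - d n) ^ 2
        ≤ (C₀' * ∑ j : Fin 2, t ^ (((j:ℕ):ℝ) - 2 * α) * (|a j n| / (lam n) ^ 2)) ^ 2 := by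
      rw [← sq_abs (c n - d n)]
      have hnn : (0:ℝ) ≤ C₀' * ∑ j : Fin 2, t ^ (((j:ℕ):ℝ) - 2 * α) * (|a j n| / (lam n) ^ 2) :=
        (abs_nonneg _).trans h1
      exact pow_le_pow_left₀ (abs_nonneg _) h1 2
    refine h2.trans ?_
    rw [mul_pow]
    have h3 : (∑ j : Fin 2, t ^ (((j:ℕ):ℝ) - 2 * α) * (|a j n| / (lam n) ^ 2)) ^ 2
        ≤ 2 * ∑ j : Fin 2, (t ^ (((j:ℕ):ℝ) - 2 * α) * (|a j n| / (lam n) ^ 2)) ^ 2 :=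
      aux_sq_sum _
    have h4 : ∀ j : Fin 2, (t ^ (((j:ℕ):ℝ) - 2 * α) * (|a j n| / (lam n) ^ 2)) ^ 2 = b j n := by
      intro j
      simp only [hb, mul_pow, hsq, div_pow, sq_abs]
    calc C₀' ^ 2 * (∑ j : Fin 2, t ^ (((j:ℕ):ℝ) - 2 * α) * (|a j n| / (lam n) ^ 2)) ^ 2
        ≤ C₀' ^ 2 * (2 * ∑ j : Fin 2, (t ^ (((j:ℕ):ℝ) - 2 * α) * (|a j n| / (lam n) ^ 2)) ^ 2) := by
          have := sq_nonneg C₀'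
          nlinarith [h3, sq_nonneg C₀']
      _ = 2 * C₀' ^ 2 * ∑ j : Fin 2, b j n := by
          rw [Finset.sum_congr rfl fun j _ => h4 j]; ring
  -- summability facts
  have hdivsq : ∀ j : Fin 2, Summable fun n => (a j n / lam n) ^ 2 := by
    intro j
    refine Summable.of_nonneg_of_le (fun n => sq_nonneg _) (fun n => ?_)
      ((ha j).mul_right (lam₁ ^ 2)⁻¹)
    have hl : ((lam n) ^ 2)⁻¹ ≤ (lam₁ ^ 2)⁻¹ :=
      inv_anti₀ (pow_pos hlam₁ 2) (pow_le_pow_left₀ hlam₁.le (hlam n) 2)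
    calc (a j n / lam n) ^ 2 = a j n ^ 2 * ((lam n) ^ 2)⁻¹ := by rw [div_pow, div_eq_mul_inv]
      _ ≤ a j n ^ 2 * (lam₁ ^ 2)⁻¹ := mul_le_mul_of_nonneg_left hl (sq_nonneg _)
  have hbsum : ∀ j : Fin 2, Summable (b j) := by
    intro j
    refine Summable.mul_left _ ?_
    refine Summable.of_nonneg_of_le (fun n => sq_nonneg _) (fun n => ?_)
      ((ha j).mul_right (lam₁ ^ 4)⁻¹)
    have hl : ((lam n) ^ 4)⁻¹ ≤ (lam₁ ^ 4)⁻¹ :=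
      inv_anti₀ (pow_pos hlam₁ 4) (pow_le_pow_left₀ hlam₁.le (hlam n) 4)
    calc (a j n / (lam n) ^ 2) ^ 2 = a j n ^ 2 * ((lam n) ^ 4)⁻¹ := by
          rw [div_pow, div_eq_mul_inv, ← pow_mul]
      _ ≤ a j n ^ 2 * (lam₁ ^ 4)⁻¹ := mul_le_mul_of_nonneg_left hl (sq_nonneg _)
  have hBsum : Summable fun n => 2 * C₀' ^ 2 * ∑ j : Fin 2, b j n :=
    (summable_sum fun j _ => hbsum j).mul_left _
  have hrsum : Summable fun n => (c n - d n) ^ 2 :=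
    Summable.of_nonneg_of_le (fun n => sq_nonneg _) hrsq hBsum
  have hdsum : Summable fun n => d n ^ 2 := by
    have hbound : ∀ n, d n ^ 2 ≤ 2 * ∑ j : Fin 2,
        (t ^ (((j:ℕ):ℝ) - α) / Real.Gamma (((j:ℕ):ℝ) + 1 - α)) ^ 2 * (a j n / lam n) ^ 2 := by
      intro n
      rw [hd]
      refine (aux_sq_sum _).trans_eq ?_
      congr 1
      refine Finset.sum_congr rfl fun j _ => ?_
      rw [mul_pow]
    refine Summable.of_nonneg_of_le (fun n => sq_nonneg _) hbound ?_
    exact (summable_sum fun j _ => (hdivsq j).mul_left _).mul_left 2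
  have hcsum : Summable fun n => c n ^ 2 := by
    have hbound : ∀ n, c n ^ 2 ≤ 2 * ((c n - d n) ^ 2 + d n ^ 2) := by
      intro n
      have := aux_sq_add (c n - d n) (d n)
      simpa using this
    refine Summable.of_nonneg_of_le (fun n => sq_nonneg _) hbound ?_
    exact (hrsum.add hdsum).mul_left 2
  obtain ⟨hcs, -⟩ := aux_orthonormal_tsum he hcsum
  obtain ⟨hds, -⟩ := aux_orthonormal_tsum he hdsum
  obtain ⟨-, hnorm⟩ := aux_orthonormal_tsum he hrsum
  have hdiff : (∑' n, c n • e n) - ∑' n, d n • e n = ∑' n, (c n - d n) • e n := by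
    rw [← Summable.tsum_sub hcs hds]
    exact tsum_congr fun n => (sub_smul _ _ _).symm
  show ‖(∑' n, c n • e n) - ∑' n, d n • e n‖ ^ 2 ≤ _
  rw [hdiff, hnorm]
  calc ∑' n, (c n - d n) ^ 2
      ≤ ∑' n, 2 * C₀' ^ 2 * ∑ j : Fin 2, b j n := Summable.tsum_le_tsum hrsq hrsum hBsum
    _ = 2 * C₀' ^ 2 * ∑ j : Fin 2,
          t ^ (2 * (((j:ℕ):ℝ) - 2 * α)) * ∑' n : ℕ, (a j n / (lam n) ^ 2) ^ 2 := by
        rw [tsum_mul_left, Summable.tsum_finsetSum fun j _ => hbsum j]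
        congr 1
        refine Finset.sum_congr rfl fun j _ => ?_
        rw [hb, tsum_mul_left]
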